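/- arXiv:1810.05809 — 3 statements merged into one kernel-verified Lean document; each statement's English description precedes it below -/
import Mathlib

section
/- For every real number α with −1 < α < 1 and every x > 0, one has (1/(2π√(1−α²))) ∫_x^∞ ∫_x^∞ exp(−(y₁² + y₂² − 2αy₁y₂)/(2(1−α²))) dy₁ dy₂ ≤ ((1+α)²/(2πx²√(1−α²))) · exp(−x²/(1+α)). -/
open Real MeasureTheory

lemma aux_int_exp (a : ℝ) {c : ℝ} (hc : 0 < c) :
    ∫ y in Set.Ioi a, Real.exp (-c * y) = Real.exp (-c * a) / c := by
  have h := MeasureTheory.integral_comp_mul_left_Ioi (fun t => Real.exp (-t)) a hc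
  simp only [smul_eq_mul] at h
  rw [show (fun y : ℝ => Real.exp (-c * y)) = (fun y => Real.exp (-(c * y)))
    from funext fun y => by rw [neg_mul]]
  rw [h, integral_exp_neg_Ioi]
  ring_nf

lemma aux_int_exp' (a : ℝ) {c : ℝ} (hc : 0 < c) :
    IntegrableOn (fun y : ℝ => Real.exp (-c * y)) (Set.Ioi a) :=
  exp_neg_integrableOn_Ioi a hc

/-- Lemma A.1 (Savage-type bound on the joint tail of a bivariate Gaussian):
for `-1 < α < 1` and `x > 0`,
`(2π√(1-α²))⁻¹ ∬_{[x,∞)²} exp(-(y₁²+y₂²-2αy₁y₂)/(2(1-α²)))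
  ≤ (1+α)²/(2πx²√(1-α²)) · exp(-x²/(1+α))`. -/
theorem gaussian_joint_tail_bound (α : ℝ) (hα₁ : -1 < α) (hα₂ : α < 1)
    (x : ℝ) (hx : 0 < x) :
    (1 / (2 * π * Real.sqrt (1 - α ^ 2))) *
      ∫ y₁ in Set.Ioi x, ∫ y₂ in Set.Ioi x,
        Real.exp (-(y₁ ^ 2 + y₂ ^ 2 - 2 * α * y₁ * y₂) / (2 * (1 - α ^ 2)))
      ≤ (1 + α) ^ 2 / (2 * π * x ^ 2 * Real.sqrt (1 - α ^ 2)) *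
        Real.exp (-x ^ 2 / (1 + α)) := by
  have h1α : (0:ℝ) < 1 + α := by linarith
  have hs : (0:ℝ) < 1 - α ^ 2 := by nlinarith
  set c : ℝ := x / (1 + α) with hc_def
  have hc : 0 < c := div_pos hx h1α
  -- pointwise bound
  have key : ∀ y₁ ∈ Set.Ioi x, ∀ y₂ ∈ Set.Ioi x,
      Real.exp (-(y₁ ^ 2 + y₂ ^ 2 - 2 * α * y₁ * y₂) / (2 * (1 - α ^ 2)))
        ≤ Real.exp (x ^ 2 / (1 + α)) * Real.exp (-c * y₁) * Real.exp (-c * y₂) := by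
    intro y₁ hy₁ y₂ hy₂
    rw [Set.mem_Ioi] at hy₁ hy₂
    rw [← Real.exp_add, ← Real.exp_add, Real.exp_le_exp]
    have : -(y₁ ^ 2 + y₂ ^ 2 - 2 * α * y₁ * y₂) / (2 * (1 - α ^ 2))
        ≤ (x ^ 2 - x * y₁ - x * y₂) / (1 + α) := by
      rw [div_le_div_iff₀ (by positivity) h1α]
      nlinarith [mul_nonneg h1α.le (sq_nonneg (y₁ - y₂)),
        mul_nonneg (by linarith : (0:ℝ) ≤ 1 - α) (sq_nonneg (y₁ + y₂ - 2 * x)),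
        sq_nonneg (y₁ - x), sq_nonneg (y₂ - x)]
    calc -(y₁ ^ 2 + y₂ ^ 2 - 2 * α * y₁ * y₂) / (2 * (1 - α ^ 2))
        ≤ (x ^ 2 - x * y₁ - x * y₂) / (1 + α) := this
      _ = x ^ 2 / (1 + α) + -c * y₁ + -c * y₂ := by
          rw [hc_def]; field_simp; ring
  -- inner integral bound
  have inner_bound : ∀ y₁ ∈ Set.Ioi x,
      (∫ y₂ in Set.Ioi x,
        Real.exp (-(y₁ ^ 2 + y₂ ^ 2 - 2 * α * y₁ * y₂) / (2 * (1 - α ^ 2))))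
        ≤ Real.exp (x ^ 2 / (1 + α)) * Real.exp (-c * y₁) * (Real.exp (-c * x) / c) := by
    intro y₁ hy₁
    have hint : IntegrableOn
        (fun y₂ => Real.exp (x ^ 2 / (1 + α)) * Real.exp (-c * y₁) * Real.exp (-c * y₂))
        (Set.Ioi x) := (aux_int_exp' x hc).const_mul _
    calc (∫ y₂ in Set.Ioi x,
          Real.exp (-(y₁ ^ 2 + y₂ ^ 2 - 2 * α * y₁ * y₂) / (2 * (1 - α ^ 2))))
        ≤ ∫ y₂ in Set.Ioi x,
            Real.exp (x ^ 2 / (1 + α)) * Real.exp (-c * y₁) * Real.exp (-c * y₂) := by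
          refine integral_mono_of_nonneg ?_ hint ?_
          · filter_upwards with y₂ using (Real.exp_pos _).le
          · filter_upwards [MeasureTheory.self_mem_ae_restrict measurableSet_Ioi] with y₂ hy₂
            exact key y₁ hy₁ y₂ hy₂
      _ = Real.exp (x ^ 2 / (1 + α)) * Real.exp (-c * y₁) * (Real.exp (-c * x) / c) := by
          rw [MeasureTheory.integral_const_mul, aux_int_exp x hc]
  -- outer integral bound
  have outer_bound :
      (∫ y₁ in Set.Ioi x, ∫ y₂ in Set.Ioi x,
        Real.exp (-(y₁ ^ 2 + y₂ ^ 2 - 2 * α * y₁ * y₂) / (2 * (1 - α ^ 2))))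
        ≤ Real.exp (x ^ 2 / (1 + α)) * (Real.exp (-c * x) / c) ^ 2 := by
    have hint : IntegrableOn
        (fun y₁ => Real.exp (x ^ 2 / (1 + α)) * (Real.exp (-c * x) / c) * Real.exp (-c * y₁))
        (Set.Ioi x) := (aux_int_exp' x hc).const_mul _
    calc (∫ y₁ in Set.Ioi x, ∫ y₂ in Set.Ioi x,
          Real.exp (-(y₁ ^ 2 + y₂ ^ 2 - 2 * α * y₁ * y₂) / (2 * (1 - α ^ 2))))
        ≤ ∫ y₁ in Set.Ioi x,
            Real.exp (x ^ 2 / (1 + α)) * (Real.exp (-c * x) / c) * Real.exp (-c * y₁) := by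
          refine integral_mono_of_nonneg ?_ hint ?_
          · filter_upwards with y₁ using
              integral_nonneg fun y₂ => (Real.exp_pos _).le
          · filter_upwards [MeasureTheory.self_mem_ae_restrict measurableSet_Ioi] with y₁ hy₁
            calc (∫ y₂ in Set.Ioi x,
                Real.exp (-(y₁ ^ 2 + y₂ ^ 2 - 2 * α * y₁ * y₂) / (2 * (1 - α ^ 2))))
                ≤ Real.exp (x ^ 2 / (1 + α)) * Real.exp (-c * y₁) * (Real.exp (-c * x) / c) :=
                  inner_bound y₁ hy₁
              _ = Real.exp (x ^ 2 / (1 + α)) * (Real.exp (-c * x) / c) * Real.exp (-c * y₁) := by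
                  ring
      _ = Real.exp (x ^ 2 / (1 + α)) * (Real.exp (-c * x) / c) ^ 2 := by
          rw [MeasureTheory.integral_const_mul, aux_int_exp x hc]; ring
  have hconst : (0:ℝ) < 1 / (2 * π * Real.sqrt (1 - α ^ 2)) := by
    have hπ := Real.pi_pos
    have := Real.sqrt_pos.mpr hs
    positivity
  calc (1 / (2 * π * Real.sqrt (1 - α ^ 2))) *
      ∫ y₁ in Set.Ioi x, ∫ y₂ in Set.Ioi x,
        Real.exp (-(y₁ ^ 2 + y₂ ^ 2 - 2 * α * y₁ * y₂) / (2 * (1 - α ^ 2)))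
      ≤ (1 / (2 * π * Real.sqrt (1 - α ^ 2))) *
          (Real.exp (x ^ 2 / (1 + α)) * (Real.exp (-c * x) / c) ^ 2) :=
        mul_le_mul_of_nonneg_left outer_bound hconst.le
    _ = (1 + α) ^ 2 / (2 * π * x ^ 2 * Real.sqrt (1 - α ^ 2)) *
        Real.exp (-x ^ 2 / (1 + α)) := by
        have hπ := Real.pi_pos
        have hsq := Real.sqrt_pos.mpr hs
        have e1 : Real.exp (x ^ 2 / (1 + α)) * (Real.exp (-c * x)) ^ 2
            = Real.exp (-x ^ 2 / (1 + α)) := by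
          rw [show Real.exp (-c * x) ^ 2 = Real.exp (-c * x + -c * x) by
            rw [Real.exp_add, sq], ← Real.exp_add]
          congr 1
          rw [hc_def]; field_simp; ring
        have hc2 : c ^ 2 = x ^ 2 / (1 + α) ^ 2 := by rw [hc_def, div_pow]
        rw [div_pow,
          show (1 : ℝ) / (2 * π * Real.sqrt (1 - α ^ 2)) *
              (Real.exp (x ^ 2 / (1 + α)) * (Real.exp (-c * x) ^ 2 / c ^ 2))
            = (Real.exp (x ^ 2 / (1 + α)) * Real.exp (-c * x) ^ 2) /
              (2 * π * Real.sqrt (1 - α ^ 2) * c ^ 2) by ring,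
          e1, hc2]
        field_simp
end

section
/- Let f : ℝ → [0,∞) be a continuous non-decreasing function such that f(y) = 0 for all y < a, for some a ∈ ℝ. Define m_t := √2·t − (log t)/(2√2). Then lim_{t→∞} e^t · ∫_ℝ (1 − e^{−f(x − m_t)}) · (2πt)^{−1/2} e^{−x²/(2t)} dx = (2π)^{−1/2} · ∫_ℝ (1 − e^{−f(y)}) e^{−√2·y} dy. -/
open Real MeasureTheory Filter

/-- The centring function `m_t = √2 t - (log t)/(2√2)`. -/
noncomputable def mCent (t : ℝ) : ℝ :=
  Real.sqrt 2 * t - Real.log t / (2 * Real.sqrt 2)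

lemma mCent_eq (t : ℝ) : mCent t = Real.sqrt 2 * t - Real.sqrt 2 * Real.log t / 4 := by
  have hs : Real.sqrt 2 * Real.sqrt 2 = 2 := Real.mul_self_sqrt (by norm_num)
  have h2 : (2 * Real.sqrt 2 : ℝ) ≠ 0 := by positivity
  rw [mCent]
  congr 1
  rw [div_eq_div_iff h2 (by norm_num)]
  linear_combination (-2 * Real.log t) * hs

lemma kernel_eq (t y : ℝ) (ht : 0 < t) :
    Real.exp t * ((Real.sqrt (2 * π * t))⁻¹ * Real.exp (-(y + mCent t) ^ 2 / (2 * t)))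
      = (Real.sqrt (2 * π))⁻¹ *
        (Real.exp (-(Real.log t) ^ 2 / (16 * t)) *
          Real.exp (-(Real.sqrt 2 * y) +
            (y * Real.sqrt 2 * Real.log t / (4 * t) - y ^ 2 / (2 * t)))) := by
  have hπ : (0:ℝ) ≤ 2 * π := by positivity
  have hsq : Real.sqrt (2 * π * t) = Real.sqrt (2 * π) * Real.sqrt t := Real.sqrt_mul hπ t
  have hst : Real.sqrt t = Real.exp (Real.log t / 2) := by
    rw [← Real.log_sqrt ht.le, Real.exp_log (Real.sqrt_pos.2 ht)]
  have hs : Real.sqrt 2 * Real.sqrt 2 = 2 := Real.mul_self_sqrt (by norm_num)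
  have key : t + -(Real.log t / 2) +
        -(y + (Real.sqrt 2 * t - Real.sqrt 2 * Real.log t / 4)) ^ 2 / (2 * t)
      = -(Real.log t) ^ 2 / (16 * t) +
        (-(Real.sqrt 2 * y) +
          (y * Real.sqrt 2 * Real.log t / (4 * t) - y ^ 2 / (2 * t))) := by
    have ht' : t ≠ 0 := ne_of_gt ht
    field_simp
    linear_combination (128 * t * Real.log t - 256 * t ^ 2
      - 16 * Real.log t ^ 2) * hs
  calc Real.exp t * ((Real.sqrt (2 * π * t))⁻¹ * Real.exp (-(y + mCent t) ^ 2 / (2 * t)))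
      = (Real.sqrt (2 * π))⁻¹ *
          Real.exp (t + -(Real.log t / 2) +
            -(y + (Real.sqrt 2 * t - Real.sqrt 2 * Real.log t / 4)) ^ 2 / (2 * t)) := by
        rw [hsq, mul_inv, hst, ← Real.exp_neg, mCent_eq, Real.exp_add, Real.exp_add]
        ring
    _ = _ := by rw [key, Real.exp_add]

/-- Equation (5.x) of the paper: for `f` continuous, non-negative, non-decreasing,
vanishing on `(-∞, a)`,
`lim_{t→∞} e^t ∫ (1 - e^{-f(x - m_t)}) (2πt)^{-1/2} e^{-x²/(2t)} dx
  = (2π)^{-1/2} ∫ (1 - e^{-f(y)}) e^{-√2 y} dy`. -/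
theorem gaussian_laplace_functional_limit (f : ℝ → ℝ) (a : ℝ)
    (hf_cont : Continuous f) (hf_mono : Monotone f)
    (hf_nonneg : ∀ y, 0 ≤ f y) (hf_zero : ∀ y, y < a → f y = 0) :
    Tendsto (fun t : ℝ =>
        Real.exp t *
          ∫ x : ℝ, (1 - Real.exp (-f (x - mCent t))) *
            ((Real.sqrt (2 * π * t))⁻¹ * Real.exp (-x ^ 2 / (2 * t))))
      atTop
      (nhds ((Real.sqrt (2 * π))⁻¹ *
        ∫ y : ℝ, (1 - Real.exp (-f y)) * Real.exp (-(Real.sqrt 2 * y)))) := by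
  have hs : Real.sqrt 2 * Real.sqrt 2 = 2 := Real.mul_self_sqrt (by norm_num)
  have hs0 : 0 < Real.sqrt 2 := by positivity
  -- the transformed integrand
  set G : ℝ → ℝ → ℝ := fun t y => (1 - Real.exp (-f y)) *
    Real.exp (-(Real.sqrt 2 * y) + (y * Real.sqrt 2 * Real.log t / (4 * t) - y ^ 2 / (2 * t)))
    with hG
  -- dominating function
  set bound : ℝ → ℝ := Set.indicator (Set.Ici a)
    (fun y => Real.exp 1 * Real.exp (-(Real.sqrt 2 * y))) with hbound
  have hbound_int : Integrable bound := by
    rw [hbound, integrable_indicator_iff measurableSet_Ici]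
    have : IntegrableOn (fun y : ℝ => Real.exp (-(Real.sqrt 2 * y))) (Set.Ioi a) := by
      simpa [mul_comm] using exp_neg_integrableOn_Ioi a hs0
    exact ((integrableOn_Ici_iff_integrableOn_Ioi).2 this).const_mul _
  -- convergence of the integrals by dominated convergence
  have hI : Tendsto (fun t => ∫ y : ℝ, G t y) atTop
      (nhds (∫ y : ℝ, (1 - Real.exp (-f y)) * Real.exp (-(Real.sqrt 2 * y)))) := by
    apply tendsto_integral_filter_of_dominated_convergence bound
    · filter_upwards [eventually_ge_atTop (1:ℝ)] with t ht
      apply Continuous.aestronglyMeasurable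
      apply Continuous.mul
      · exact continuous_const.sub (Real.continuous_exp.comp hf_cont.neg)
      · fun_prop
    · filter_upwards [eventually_ge_atTop (1:ℝ)] with t ht
      apply Filter.Eventually.of_forall
      intro y
      have ht0 : (0:ℝ) < t := lt_of_lt_of_le one_pos ht
      by_cases hy : a ≤ y
      · have hL0 : 0 ≤ Real.log t := Real.log_nonneg ht
        -- log t ≤ 2 √t, hence (log t)^2 ≤ 4 t
        have hlog : Real.log t ≤ 2 * Real.sqrt t := by
          have h1 : Real.log (Real.sqrt t) ≤ Real.sqrt t - 1 :=
            Real.log_le_sub_one_of_pos (Real.sqrt_pos.2 ht0)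
          rw [Real.log_sqrt ht0.le] at h1
          linarith
        have hL2 : Real.log t ^ 2 ≤ 4 * t := by
          have hsq : Real.sqrt t * Real.sqrt t = t := Real.mul_self_sqrt ht0.le
          nlinarith [Real.sqrt_nonneg t]
        have hphi : y * Real.sqrt 2 * Real.log t / (4 * t) - y ^ 2 / (2 * t) ≤ 1 := by
          rw [div_sub_div _ _ (by positivity : (4:ℝ) * t ≠ 0) (by positivity : (2:ℝ) * t ≠ 0),
            div_le_one (by positivity)]
          have e : (Real.sqrt 2 * y - Real.log t / 2) ^ 2
              = 2 * y ^ 2 - Real.sqrt 2 * y * Real.log t + Real.log t ^ 2 / 4 := by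
            linear_combination y ^ 2 * hs
          have key1 : Real.sqrt 2 * y * Real.log t ≤ 2 * y ^ 2 + Real.log t ^ 2 / 4 := by
            have := sq_nonneg (Real.sqrt 2 * y - Real.log t / 2)
            rw [e] at this; linarith
          have key2 := mul_le_mul_of_nonneg_left key1 (by positivity : (0:ℝ) ≤ 2 * t)
          have key3 := mul_le_mul_of_nonneg_left hL2 ht0.le
          nlinarith [sq_nonneg t, sq_nonneg y, mul_nonneg ht0.le (sq_nonneg y)]
        have hexp1 : Real.exp (-f y) ≤ 1 := Real.exp_le_one_iff.2 (neg_nonpos.2 (hf_nonneg y))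
        have hGnn : 0 ≤ G t y := by
          apply mul_nonneg (by linarith) (Real.exp_nonneg _)
        rw [hbound, Set.indicator_of_mem (Set.mem_Ici.mpr hy), Real.norm_eq_abs, abs_of_nonneg hGnn, hG]
        calc (1 - Real.exp (-f y)) *
              Real.exp (-(Real.sqrt 2 * y) +
                (y * Real.sqrt 2 * Real.log t / (4 * t) - y ^ 2 / (2 * t)))
            ≤ 1 * Real.exp (-(Real.sqrt 2 * y) + 1) := by
              apply mul_le_mul (by linarith [Real.exp_nonneg (-f y)]) (Real.exp_le_exp.2 (by linarith))
                (Real.exp_nonneg _) one_pos.le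
          _ = Real.exp 1 * Real.exp (-(Real.sqrt 2 * y)) := by
              rw [one_mul, Real.exp_add]; ring
      · have hf0 : f y = 0 := hf_zero y (lt_of_not_ge hy)
        rw [hbound, Set.indicator_of_notMem (by simpa using hy), hG]
        simp [hf0]
    · exact hbound_int
    · apply Filter.Eventually.of_forall
      intro y
      have h1 : Tendsto (fun t : ℝ => Real.log t / t) atTop (nhds 0) := by
        simpa using Real.tendsto_pow_log_div_mul_add_atTop 1 0 1 one_ne_zero
      have h2 : Tendsto (fun t : ℝ => t⁻¹) atTop (nhds 0) := tendsto_inv_atTop_zero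
      have h3 : Tendsto (fun t : ℝ =>
          y * Real.sqrt 2 * Real.log t / (4 * t) - y ^ 2 / (2 * t)) atTop (nhds 0) := by
        have := (h1.const_mul (y * Real.sqrt 2 / 4)).sub (h2.const_mul (y ^ 2 / 2))
        rw [mul_zero, mul_zero, sub_zero] at this
        exact this.congr (fun t => by ring)
      have h4 : Tendsto (fun t : ℝ =>
          -(Real.sqrt 2 * y) + (y * Real.sqrt 2 * Real.log t / (4 * t) - y ^ 2 / (2 * t)))
          atTop (nhds (-(Real.sqrt 2 * y))) := by
        simpa using (tendsto_const_nhds (x := -(Real.sqrt 2 * y))).add h3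
      have h5 := (Real.continuous_exp.tendsto _).comp h4
      simpa [hG, Function.comp] using
        (tendsto_const_nhds (x := 1 - Real.exp (-f y))).mul h5
  -- convergence of the prefactor
  have hA : Tendsto (fun t : ℝ => Real.exp (-(Real.log t) ^ 2 / (16 * t))) atTop (nhds 1) := by
    have h2 : Tendsto (fun t : ℝ => Real.log t ^ 2 / (1 * t + 0)) atTop (nhds 0) :=
      Real.tendsto_pow_log_div_mul_add_atTop 1 0 2 one_ne_zero
    have h3 : Tendsto (fun t : ℝ => -(Real.log t) ^ 2 / (16 * t)) atTop (nhds 0) := by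
      have := h2.const_mul (-(1:ℝ)/16)
      rw [mul_zero] at this
      exact this.congr (fun t => by ring)
    have h5 := (Real.continuous_exp.tendsto _).comp h3
    simpa [Function.comp_def] using h5
  -- eventual equality
  have heq : ∀ᶠ t in atTop, Real.exp t *
        ∫ x : ℝ, (1 - Real.exp (-f (x - mCent t))) *
          ((Real.sqrt (2 * π * t))⁻¹ * Real.exp (-x ^ 2 / (2 * t)))
      = (Real.sqrt (2 * π))⁻¹ *
          (Real.exp (-(Real.log t) ^ 2 / (16 * t)) * ∫ y : ℝ, G t y) := by
    filter_upwards [eventually_gt_atTop (0:ℝ)] with t ht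
    have hshift : (∫ x : ℝ, (1 - Real.exp (-f (x - mCent t))) *
          ((Real.sqrt (2 * π * t))⁻¹ * Real.exp (-x ^ 2 / (2 * t))))
        = ∫ y : ℝ, (1 - Real.exp (-f y)) *
          ((Real.sqrt (2 * π * t))⁻¹ * Real.exp (-(y + mCent t) ^ 2 / (2 * t))) := by
      rw [← MeasureTheory.integral_add_right_eq_self
        (fun x : ℝ => (1 - Real.exp (-f (x - mCent t))) *
          ((Real.sqrt (2 * π * t))⁻¹ * Real.exp (-x ^ 2 / (2 * t)))) (mCent t)]
      simp
    rw [hshift, ← integral_const_mul, ← integral_const_mul, ← integral_const_mul]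
    apply integral_congr_ae
    apply Filter.Eventually.of_forall
    intro y
    have hker := kernel_eq t y ht
    calc Real.exp t * ((1 - Real.exp (-f y)) *
          ((Real.sqrt (2 * π * t))⁻¹ * Real.exp (-(y + mCent t) ^ 2 / (2 * t))))
        = (1 - Real.exp (-f y)) * (Real.exp t *
            ((Real.sqrt (2 * π * t))⁻¹ * Real.exp (-(y + mCent t) ^ 2 / (2 * t)))) := by ring
      _ = (Real.sqrt (2 * π))⁻¹ * (Real.exp (-(Real.log t) ^ 2 / (16 * t)) * G t y) := by
          rw [hker, hG]; ring
  -- combine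
  have hfin := (hA.mul hI).const_mul ((Real.sqrt (2 * π))⁻¹)
  rw [one_mul] at hfin
  exact Tendsto.congr' (heq.mono fun t h => h.symm) hfin
end

section
/- Let f : ℝ → [0,∞) be a continuous non-decreasing function such that f(y) = 0 for all y < a, for some a ∈ ℝ. Define m_t := √2·t − (log t)/(2√2) and q_t := ∫_ℝ e^{−f(x − m_t)} · (2πt)^{−1/2} e^{−x²/(2t)} dx. Then lim_{t→∞} ( e^{−t} q_t ) / ( 1 − (1 − e^{−t}) q_t ) = ( 1 + (2π)^{−1/2} ∫_ℝ (1 − e^{−f(y)}) e^{−√2·y} dy )^{−1}. -/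
open Real MeasureTheory Filter

/-- `q_t = E[e^{-f(X_t - m_t)}]` for `X_t` a centred Gaussian with variance `t`,
written against the Gaussian density. -/
noncomputable def qLaplace (f : ℝ → ℝ) (t : ℝ) : ℝ :=
  ∫ x : ℝ, Real.exp (-f (x - mCent t)) *
    ((Real.sqrt (2 * π * t))⁻¹ * Real.exp (-x ^ 2 / (2 * t)))

set_option maxHeartbeats 1000000

lemma sqrt_eq_exp_half_log' {t : ℝ} (ht : 0 < t) :
    Real.sqrt t = Real.exp (Real.log t / 2) := by
  have h : Real.exp (Real.log t / 2) * Real.exp (Real.log t / 2) = t := by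
    rw [← Real.exp_add, add_halves, Real.exp_log ht]
  conv_lhs => rw [← h]
  exact Real.sqrt_mul_self (Real.exp_nonneg _)

/-- The key Gaussian recentring identity:
`e^t φ_t(y + m_t) = (2π)^{-1/2} e^{-√2 y} e^{-(y - log t/(2√2))²/(2t)}`. -/
lemma gauss_shift (t y : ℝ) (ht : 0 < t) :
    Real.exp t * ((Real.sqrt (2 * π * t))⁻¹ * Real.exp (-(y + mCent t) ^ 2 / (2 * t))) =
    (Real.sqrt (2 * π))⁻¹ *
      (Real.exp (-(Real.sqrt 2 * y)) *
        Real.exp (-(y - Real.log t / (2 * Real.sqrt 2)) ^ 2 / (2 * t))) := by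
  have hs2 : Real.sqrt 2 * Real.sqrt 2 = 2 := Real.mul_self_sqrt (by norm_num)
  have hs2' : Real.sqrt 2 ≠ 0 := by positivity
  have hrw : ∀ L : ℝ, L / (2 * Real.sqrt 2) = Real.sqrt 2 * L / 4 := by
    intro L
    rw [div_eq_iff (by positivity : (2:ℝ) * Real.sqrt 2 ≠ 0)]
    linear_combination (-L/2) * hs2
  have h2π : (0:ℝ) < 2 * π := by positivity
  rw [Real.sqrt_mul h2π.le, mul_inv, sqrt_eq_exp_half_log' ht, ← Real.exp_neg, mCent, hrw]
  have hE : Real.exp t * (Real.exp (-(Real.log t / 2)) *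
        Real.exp (-(y + (Real.sqrt 2 * t - Real.sqrt 2 * Real.log t / 4)) ^ 2 / (2 * t)))
      = Real.exp (-(Real.sqrt 2 * y)) *
        Real.exp (-(y - Real.sqrt 2 * Real.log t / 4) ^ 2 / (2 * t)) := by
    rw [← Real.exp_add, ← Real.exp_add, ← Real.exp_add]
    congr 1
    field_simp
    ring_nf
    rw [Real.sq_sqrt (by norm_num : (0:ℝ) ≤ 2)]
    ring
  linear_combination (Real.sqrt (2 * π))⁻¹ * hE

/-- `e^t (1 - q_t)` as an explicit integral after recentring. -/
lemma exp_mul_one_sub_q (f : ℝ → ℝ) (hf_cont : Continuous f) (hf_nonneg : ∀ y, 0 ≤ f y)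
    {t : ℝ} (ht : 0 < t) :
    Real.exp t * (1 - qLaplace f t) =
      ∫ y : ℝ, (1 - Real.exp (-f y)) *
        ((Real.sqrt (2 * π))⁻¹ * (Real.exp (-(Real.sqrt 2 * y)) *
          Real.exp (-(y - Real.log t / (2 * Real.sqrt 2)) ^ 2 / (2 * t)))) := by
  have h2πt : (0:ℝ) < 2 * π * t := by positivity
  have hb : (0:ℝ) < 1 / (2 * t) := by positivity
  have hφeq : (fun x : ℝ => (Real.sqrt (2 * π * t))⁻¹ * Real.exp (-x ^ 2 / (2 * t)))
      = fun x : ℝ => (Real.sqrt (2 * π * t))⁻¹ * Real.exp (-(1 / (2 * t)) * x ^ 2) := by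
    funext x; congr 1; field_simp
  have hφ : Integrable (fun x : ℝ => (Real.sqrt (2 * π * t))⁻¹ * Real.exp (-x ^ 2 / (2 * t))) := by
    rw [hφeq]
    exact (integrable_exp_neg_mul_sq hb).const_mul _
  have hφtotal : (∫ x : ℝ, (Real.sqrt (2 * π * t))⁻¹ * Real.exp (-x ^ 2 / (2 * t))) = 1 := by
    rw [hφeq, MeasureTheory.integral_const_mul, integral_gaussian,
      show π / (1 / (2 * t)) = 2 * π * t by field_simp]
    exact inv_mul_cancel₀ (Real.sqrt_ne_zero'.mpr h2πt)
  have hcontφ : Continuous (fun x : ℝ => (Real.sqrt (2 * π * t))⁻¹ * Real.exp (-x ^ 2 / (2 * t))) :=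
    continuous_const.mul (Real.continuous_exp.comp (((continuous_pow 2).neg).div_const _))
  have hq_int : Integrable (fun x : ℝ => Real.exp (-f (x - mCent t)) *
      ((Real.sqrt (2 * π * t))⁻¹ * Real.exp (-x ^ 2 / (2 * t)))) := by
    refine hφ.mono' ?_ ?_
    · exact ((Real.continuous_exp.comp
        ((hf_cont.comp (continuous_id.sub continuous_const)).neg)).mul hcontφ).aestronglyMeasurable
    · filter_upwards with x
      have h1 : Real.exp (-f (x - mCent t)) ≤ 1 :=
        Real.exp_le_one_iff.mpr (neg_nonpos.mpr (hf_nonneg _))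
      have h2 : (0:ℝ) ≤ (Real.sqrt (2 * π * t))⁻¹ * Real.exp (-x ^ 2 / (2 * t)) := by positivity
      rw [Real.norm_eq_abs, abs_of_nonneg (by positivity)]
      exact mul_le_of_le_one_left h2 h1
  have hsub : 1 - qLaplace f t = ∫ x : ℝ, (1 - Real.exp (-f (x - mCent t))) *
      ((Real.sqrt (2 * π * t))⁻¹ * Real.exp (-x ^ 2 / (2 * t))) := by
    have heq : (fun x : ℝ => (1 - Real.exp (-f (x - mCent t))) *
        ((Real.sqrt (2 * π * t))⁻¹ * Real.exp (-x ^ 2 / (2 * t))))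
        = fun x : ℝ => ((Real.sqrt (2 * π * t))⁻¹ * Real.exp (-x ^ 2 / (2 * t)))
          - Real.exp (-f (x - mCent t)) * ((Real.sqrt (2 * π * t))⁻¹ * Real.exp (-x ^ 2 / (2 * t))) := by
      funext x; ring
    rw [heq, MeasureTheory.integral_sub hφ hq_int, hφtotal, qLaplace]
  have hchg : (∫ x : ℝ, (1 - Real.exp (-f (x - mCent t))) *
        ((Real.sqrt (2 * π * t))⁻¹ * Real.exp (-x ^ 2 / (2 * t))))
      = ∫ y : ℝ, (1 - Real.exp (-f y)) *
        ((Real.sqrt (2 * π * t))⁻¹ * Real.exp (-(y + mCent t) ^ 2 / (2 * t))) := by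
    rw [← MeasureTheory.integral_add_right_eq_self (fun x => (1 - Real.exp (-f (x - mCent t))) *
      ((Real.sqrt (2 * π * t))⁻¹ * Real.exp (-x ^ 2 / (2 * t)))) (mCent t)]
    simp only [add_sub_cancel_right]
  rw [hsub, hchg, ← MeasureTheory.integral_const_mul]
  congr 1; funext y
  linear_combination (1 - Real.exp (-f y)) * gauss_shift t y ht

/-- Dominated convergence: `e^t(1 - q_t) → (2π)^{-1/2} ∫ (1 - e^{-f}) e^{-√2 y}`. -/
lemma dct_limit (f : ℝ → ℝ) (a : ℝ) (hf_cont : Continuous f) (hf_nonneg : ∀ y, 0 ≤ f y)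
    (hf_zero : ∀ y, y < a → f y = 0) :
    Tendsto (fun t : ℝ => ∫ y : ℝ, (1 - Real.exp (-f y)) *
        ((Real.sqrt (2 * π))⁻¹ * (Real.exp (-(Real.sqrt 2 * y)) *
          Real.exp (-(y - Real.log t / (2 * Real.sqrt 2)) ^ 2 / (2 * t)))))
      atTop
      (nhds ((Real.sqrt (2 * π))⁻¹ *
        ∫ y : ℝ, (1 - Real.exp (-f y)) * Real.exp (-(Real.sqrt 2 * y)))) := by
  have hs2' : Real.sqrt 2 ≠ 0 := by positivity
  set c : ℝ := (Real.sqrt (2 * π))⁻¹ with hc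
  have hc0 : 0 ≤ c := by positivity
  set F : ℝ → ℝ → ℝ := fun t y => (1 - Real.exp (-f y)) *
        (c * (Real.exp (-(Real.sqrt 2 * y)) *
          Real.exp (-(y - Real.log t / (2 * Real.sqrt 2)) ^ 2 / (2 * t)))) with hF
  set G : ℝ → ℝ := fun y => (1 - Real.exp (-f y)) * (c * Real.exp (-(Real.sqrt 2 * y))) with hG
  set bound : ℝ → ℝ := Set.indicator (Set.Ici a) (fun y => c * Real.exp (-(Real.sqrt 2 * y)))
    with hbound
  have hbound_int : Integrable bound := by
    rw [hbound, integrable_indicator_iff measurableSet_Ici]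
    have h1 : IntegrableOn (fun y : ℝ => Real.exp (-Real.sqrt 2 * y)) (Set.Ioi (a - 1)) :=
      exp_neg_integrableOn_Ioi (a - 1) (by positivity)
    have h2 : IntegrableOn (fun y : ℝ => Real.exp (-(Real.sqrt 2 * y))) (Set.Ici a) := by
      have := h1.mono_set (Set.Ici_subset_Ioi.mpr (by linarith : a - 1 < a))
      simpa [neg_mul] using this
    exact h2.const_mul c
  have hmeas : ∀ᶠ t in (atTop : Filter ℝ), AEStronglyMeasurable (F t) volume := by
    filter_upwards with t
    refine Continuous.aestronglyMeasurable ?_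
    exact (continuous_const.sub (Real.continuous_exp.comp hf_cont.neg)).mul
      (continuous_const.mul ((Real.continuous_exp.comp (continuous_const.mul continuous_id).neg).mul
        (Real.continuous_exp.comp (((continuous_id.sub continuous_const).pow 2).neg.div_const _))))
  have hbd : ∀ᶠ t in (atTop : Filter ℝ), ∀ᵐ y : ℝ, ‖F t y‖ ≤ bound y := by
    filter_upwards [eventually_gt_atTop (0:ℝ)] with t ht
    filter_upwards with y
    have hg0 : 0 ≤ 1 - Real.exp (-f y) := by
      have := Real.exp_le_one_iff.mpr (neg_nonpos.mpr (hf_nonneg y)); linarith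
    have hg1 : 1 - Real.exp (-f y) ≤ 1 := by
      have := Real.exp_pos (-f y); linarith
    have hex1 : Real.exp (-(y - Real.log t / (2 * Real.sqrt 2)) ^ 2 / (2 * t)) ≤ 1 := by
      apply Real.exp_le_one_iff.mpr
      apply div_nonpos_of_nonpos_of_nonneg (neg_nonpos.mpr (by positivity)) (by linarith)
    have hexpos := Real.exp_pos (-(y - Real.log t / (2 * Real.sqrt 2)) ^ 2 / (2 * t))
    rw [hF, Real.norm_eq_abs]
    beta_reduce
    rw [abs_of_nonneg (by positivity)]
    by_cases hy : a ≤ y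
    · rw [hbound, Set.indicator_of_mem (Set.mem_Ici.mpr hy)]
      have he := Real.exp_pos (-(Real.sqrt 2 * y))
      calc (1 - Real.exp (-f y)) * (c * (Real.exp (-(Real.sqrt 2 * y)) *
            Real.exp (-(y - Real.log t / (2 * Real.sqrt 2)) ^ 2 / (2 * t))))
          ≤ 1 * (c * (Real.exp (-(Real.sqrt 2 * y)) *
            Real.exp (-(y - Real.log t / (2 * Real.sqrt 2)) ^ 2 / (2 * t)))) :=
            mul_le_mul_of_nonneg_right hg1 (by positivity)
        _ = c * (Real.exp (-(Real.sqrt 2 * y)) *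
            Real.exp (-(y - Real.log t / (2 * Real.sqrt 2)) ^ 2 / (2 * t))) := one_mul _
        _ ≤ c * (Real.exp (-(Real.sqrt 2 * y)) * 1) :=
            mul_le_mul_of_nonneg_left (mul_le_mul_of_nonneg_left hex1 he.le) hc0
        _ = c * Real.exp (-(Real.sqrt 2 * y)) := by ring
    · push_neg at hy
      rw [hbound, Set.indicator_of_notMem (by simpa using hy), hf_zero y hy]
      simp
  have hlim : ∀ᵐ y : ℝ, Tendsto (fun t => F t y) atTop (nhds (G y)) := by
    filter_upwards with y
    have h1 : Tendsto (fun x : ℝ => Real.log x ^ 1 / (1 * x + 0)) atTop (nhds 0) :=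
      Real.tendsto_pow_log_div_mul_add_atTop 1 0 1 one_ne_zero
    have h2 : Tendsto (fun x : ℝ => Real.log x ^ 2 / (1 * x + 0)) atTop (nhds 0) :=
      Real.tendsto_pow_log_div_mul_add_atTop 1 0 2 one_ne_zero
    have h3 : Tendsto (fun x : ℝ => x⁻¹) atTop (nhds (0:ℝ)) := tendsto_inv_atTop_zero
    have hsum : Tendsto (fun t : ℝ => (-(y^2)/2) * t⁻¹
        + (y / (2 * Real.sqrt 2)) * (Real.log t ^ 1 / (1 * t + 0))
        + (-(1:ℝ)/16) * (Real.log t ^ 2 / (1 * t + 0))) atTop (nhds 0) := by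
      have := ((h3.const_mul (-(y^2)/2)).add (h1.const_mul (y / (2 * Real.sqrt 2)))).add
        (h2.const_mul (-(1:ℝ)/16))
      simpa using this
    have hq : Tendsto (fun t : ℝ => -(y - Real.log t / (2 * Real.sqrt 2)) ^ 2 / (2 * t))
        atTop (nhds 0) := by
      refine hsum.congr' ?_
      filter_upwards [eventually_gt_atTop (0:ℝ)] with t ht
      have ht' : t ≠ 0 := ne_of_gt ht
      field_simp
      ring_nf
      rw [Real.sq_sqrt (by norm_num : (0:ℝ) ≤ 2)]
      ring
    have hexp : Tendsto (fun t : ℝ =>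
        Real.exp (-(y - Real.log t / (2 * Real.sqrt 2)) ^ 2 / (2 * t))) atTop (nhds 1) := by
      simpa [Function.comp_def] using (Real.continuous_exp.tendsto 0).comp hq
    have h5 := ((hexp.const_mul (Real.exp (-(Real.sqrt 2 * y)))).const_mul c).const_mul
      (1 - Real.exp (-f y))
    rw [hF, hG]
    simpa [mul_assoc, mul_one] using h5
  have hmain := MeasureTheory.tendsto_integral_filter_of_dominated_convergence
    (μ := volume) (l := (atTop : Filter ℝ)) (F := F) (f := G) bound hmeas hbd hbound_int hlim
  have hfin : (∫ y : ℝ, G y)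
      = c * ∫ y : ℝ, (1 - Real.exp (-f y)) * Real.exp (-(Real.sqrt 2 * y)) := by
    rw [hG, ← MeasureTheory.integral_const_mul]
    congr 1; funext y; ring
  rw [← hfin]
  have hFG : (fun t : ℝ => ∫ y : ℝ, (1 - Real.exp (-f y)) *
        (c * (Real.exp (-(Real.sqrt 2 * y)) *
          Real.exp (-(y - Real.log t / (2 * Real.sqrt 2)) ^ 2 / (2 * t)))))
      = fun t : ℝ => ∫ y : ℝ, F t y := by
    funext t; rw [hF]
  rw [hFG]
  exact hmain

/-- Convergence of the Laplace functional of the extremal process of a geometric number of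
i.i.d. Gaussians: for `f` continuous, non-negative, non-decreasing, vanishing on `(-∞, a)`,
`lim_{t→∞} (e^{-t} q_t)/(1 - (1 - e^{-t}) q_t)
  = (1 + (2π)^{-1/2} ∫ (1 - e^{-f(y)}) e^{-√2 y} dy)⁻¹`. -/
theorem geometric_gaussian_laplace_limit (f : ℝ → ℝ) (a : ℝ)
    (hf_cont : Continuous f) (hf_mono : Monotone f)
    (hf_nonneg : ∀ y, 0 ≤ f y) (hf_zero : ∀ y, y < a → f y = 0) :
    Tendsto (fun t : ℝ =>
        (Real.exp (-t) * qLaplace f t) / (1 - (1 - Real.exp (-t)) * qLaplace f t))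
      atTop
      (nhds ((1 + (Real.sqrt (2 * π))⁻¹ *
        ∫ y : ℝ, (1 - Real.exp (-f y)) * Real.exp (-(Real.sqrt 2 * y)))⁻¹)) := by
  set CC : ℝ := (Real.sqrt (2 * π))⁻¹ *
    ∫ y : ℝ, (1 - Real.exp (-f y)) * Real.exp (-(Real.sqrt 2 * y)) with hCC
  set qq : ℝ → ℝ := qLaplace f with hqq
  have hC0 : 0 ≤ CC := by
    rw [hCC]
    refine mul_nonneg (by positivity) (integral_nonneg fun y => mul_nonneg ?_ (Real.exp_pos _).le)
    have := Real.exp_le_one_iff.mpr (neg_nonpos.mpr (hf_nonneg y)); linarith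
  have hA : Tendsto (fun t => Real.exp t * (1 - qq t)) atTop (nhds CC) := by
    refine (dct_limit f a hf_cont hf_nonneg hf_zero).congr' ?_
    filter_upwards [eventually_gt_atTop (0:ℝ)] with t ht
    exact (exp_mul_one_sub_q f hf_cont hf_nonneg ht).symm
  have hq1 : Tendsto qq atTop (nhds 1) := by
    have h0 : Tendsto (fun t => Real.exp (-t) * (Real.exp t * (1 - qq t))) atTop
        (nhds (0 * CC)) := (Real.tendsto_exp_neg_atTop_nhds_zero.mul hA)
    have heq : (fun t => Real.exp (-t) * (Real.exp t * (1 - qq t))) = fun t => 1 - qq t := by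
      funext t
      rw [← mul_assoc, ← Real.exp_add]
      simp
    rw [heq, zero_mul] at h0
    have := tendsto_const_nhds (x := (1:ℝ)) (f := (atTop : Filter ℝ)) |>.sub h0
    simpa using this
  have hD : Tendsto (fun t => Real.exp t * (1 - qq t) + qq t) atTop (nhds (CC + 1)) :=
    hA.add hq1
  have hCpos : (0:ℝ) < CC + 1 := by linarith
  have hratio : Tendsto (fun t => qq t / (Real.exp t * (1 - qq t) + qq t)) atTop
      (nhds (1 / (CC + 1))) := hq1.div hD (ne_of_gt hCpos)
  have hfin : (1 + CC)⁻¹ = 1 / (CC + 1) := by rw [inv_eq_one_div, add_comm]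
  rw [hfin]
  refine hratio.congr' ?_
  filter_upwards [hD (Ioi_mem_nhds hCpos)] with t ht
  have hexp : Real.exp (-t) * Real.exp t = 1 := by rw [← Real.exp_add]; simp
  have hden : 1 - (1 - Real.exp (-t)) * qq t
      = Real.exp (-t) * (Real.exp t * (1 - qq t) + qq t) := by
    linear_combination (qq t - 1) * hexp
  rw [hden, mul_div_mul_left _ _ (Real.exp_ne_zero (-t))]
end
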